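/- arXiv:2404.07604 — 4 statements merged into one kernel-verified Lean document; each statement's English description precedes it below -/
import Mathlib

section
/- Let N ≥ 1, 1 ≤ N_v ≤ N, M = N − N_v + 1, and let L be divisible by N_v with T = L/N_v. Let F = [f_0, …, f_{T−1}] ∈ ℂ^{M×T}, and let W ∈ ℂ^{N×L} be the SVAM beamformer matrix whose column with index l = t·N_v + m (0 ≤ m < N_v, 0 ≤ t < T) is w_l = [0_m^T, f_t^T, 0_{N_v−1−m}^T]^T ∈ ℂ^N (the vector f_t shifted down by m positions and zero-padded). Then for every u ∈ ℝ: (∂φ_N(u)/∂u)^H W W^H (∂φ_N(u)/∂u) = N_v · [ (∂φ_M(u)/∂u)^H F F^H (∂φ_M(u)/∂u) + G ], where G = (π²(N_v−1)(2N_v−1)/6) · φ_M(u)^H F F^H φ_M(u) − π(N_v−1) · Im{ (∂φ_M(u)/∂u)^H F F^H φ_M(u) }. Consequently (for α ≠ 0, P_s > 0, σ_n² > 0, and the bracketed quantity nonzero) the Cramér–Rao bound for estimating u from measurements y = √P_s α W^H φ_N(u) + n, n ∼ CN(0, σ_n² I), equals CRB(u) = (1/N_v)·(σ_n²/(2P_s|α|²))·{(∂φ_M(u)/∂u)^H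 F F^H (∂φ_M(u)/∂u) + G}^{-1}. -/
open Matrix

/-- Steering vector of a ULA: `(φ_N(u))_n = exp(iπnu)`. -/
noncomputable def steer (N : ℕ) (u : ℝ) : Fin N → ℂ :=
  fun n => Complex.exp (Complex.I * (Real.pi * u * n))

/-- Entrywise derivative of the steering vector: `(∂φ_N(u)/∂u)_n = iπn·exp(iπnu)`. -/
noncomputable def dsteer (N : ℕ) (u : ℝ) : Fin N → ℂ :=
  fun n => Complex.I * (Real.pi * n) * Complex.exp (Complex.I * (Real.pi * u * n))

/-!
Column `(t, m)` of `W` is `f_t` shifted down by `m`, and `∂φ_N(u)` at index `k + m` equals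
`e^{iπum} (∂φ_M(u)_k + iπm φ_M(u)_k)`. Hence that column's inner product with `∂φ_N(u)` is
`e^{iπum} (a_t + iπm b_t)` with `a = Fᴴ ∂φ_M(u)`, `b = Fᴴ φ_M(u)`. Expanding
`|a_t + iπm b_t|² = |a_t|² + π²m²|b_t|² - 2πm Im(a̅_t b_t)` and summing over `m < N_v` with
`Σ m = N_v(N_v-1)/2`, `Σ m² = N_v(N_v-1)(2N_v-1)/6` gives the identity; the CRB formula
then follows by field arithmetic.
-/

open Complex Finset

theorem star_dotProduct_mul_conjTranspose_mulVec {m n R : Type*} [Fintype m] [Fintype n]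
    [CommSemiring R] [StarRing R] (A : Matrix m n R) (x y : m → R) :
    star x ⬝ᵥ ((A * Aᴴ) *ᵥ y) = star (Aᴴ *ᵥ x) ⬝ᵥ (Aᴴ *ᵥ y) := by
  rw [← mulVec_mulVec, dotProduct_mulVec, star_mulVec, conjTranspose_conjTranspose]

theorem star_dotProduct_self_eq_sum_normSq {ι : Type*} [Fintype ι] (v : ι → ℂ) :
    star v ⬝ᵥ v = ((∑ i, normSq (v i) : ℝ) : ℂ) := by
  simp [dotProduct, normSq_eq_conj_mul_self]

theorem sum_fin_natCast_real (n : ℕ) : ∑ i : Fin n, (i : ℝ) = n * (n - 1) / 2 := by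
  rw [Fin.sum_univ_eq_sum_range (fun i => (i : ℝ))]
  induction n with
  | zero => simp
  | succ n ih => rw [sum_range_succ, ih]; push_cast; ring

theorem sum_fin_natCast_sq_real (n : ℕ) :
    ∑ i : Fin n, (i : ℝ) ^ 2 = n * (n - 1) * (2 * n - 1) / 6 := by
  rw [Fin.sum_univ_eq_sum_range (fun i => (i : ℝ) ^ 2)]
  induction n with
  | zero => simp
  | succ n ih => rw [sum_range_succ, ih]; push_cast; ring

theorem normSq_mul_add_I_mul {E : ℂ} (hE : ‖E‖ = 1) (a b : ℂ) (r : ℝ) :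
    normSq (E * (a + I * r * b)) = normSq a + r ^ 2 * normSq b - 2 * r * (star a * b).im := by
  rw [normSq_mul, normSq_eq_norm_sq, hE]
  simp [normSq_apply]
  ring

theorem sum_normSq_mul_add_I_mul_pi_mul (n : ℕ) {E : Fin n → ℂ} (hE : ∀ m, ‖E m‖ = 1)
    (a b : ℂ) :
    ∑ m : Fin n, normSq (E m * (a + I * (Real.pi * m) * b))
      = n * normSq a + Real.pi ^ 2 * (n * (n - 1) * (2 * n - 1) / 6) * normSq b
        - Real.pi * (n * (n - 1)) * (star a * b).im := by
  have h := fun m : Fin n => normSq_mul_add_I_mul (hE m) a b (Real.pi * m)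
  push_cast at h
  simp only [h, sum_add_distrib, sum_sub_distrib, ← sum_mul, mul_pow, ← mul_sum,
    sum_fin_natCast_real, sum_fin_natCast_sq_real, sum_const, card_univ, Fintype.card_fin,
    nsmul_eq_mul]
  ring

theorem val_add_val_lt_of_add_eq_add_one {M N Nv : ℕ} (hM : M + Nv = N + 1) (k : Fin M)
    (m : Fin Nv) : (k : ℕ) + m < N := by
  have := k.isLt; have := m.isLt; omega

theorem dsteer_shift {M N : ℕ} (u : ℝ) (k : Fin M) (m : ℕ) (h : k + m < N) :
    dsteer N u ⟨k + m, h⟩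
      = exp (I * (Real.pi * u * m)) * (dsteer M u k + I * (Real.pi * m) * steer M u k) := by
  simp only [dsteer, steer, Nat.cast_add, mul_add, exp_add]
  ring

/-- Column `l = t * Nv + m` of `W` is column `t` of `F` shifted down by `m`, zero-padded. -/
def IsSvamBeamformer {N M T Nv : ℕ} (hNv : 0 < Nv) (F : Matrix (Fin M) (Fin T) ℂ)
    (W : Matrix (Fin N) (Fin (T * Nv)) ℂ) : Prop :=
  ∀ (n : Fin N) (l : Fin (T * Nv)),
    W n l = if h : l.val % Nv ≤ n.val ∧ n.val - l.val % Nv < M then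
        F ⟨n.val - l.val % Nv, h.2⟩ ⟨l.val / Nv, (Nat.div_lt_iff_lt_mul hNv).mpr l.isLt⟩
      else 0

section Svam

variable {N M T Nv : ℕ} {hNv : 0 < Nv} (hM : M + Nv = N + 1)
  {F : Matrix (Fin M) (Fin T) ℂ} {W : Matrix (Fin N) (Fin (T * Nv)) ℂ}
  (hW : IsSvamBeamformer hNv F W)

include hM hW in
theorem svam_conjTranspose_mulVec (g : Fin N → ℂ) (t : Fin T) (m : Fin Nv) :
    (Wᴴ *ᵥ g) (finProdFinEquiv (t, m))
      = ∑ k : Fin M, star (F k t) * g ⟨k + m, val_add_val_lt_of_add_eq_add_one hM k m⟩ := by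
  set l := finProdFinEquiv (t, m)
  have hl : (l : ℕ) = m + Nv * t := rfl
  have hmod : (l : ℕ) % Nv = m := by
    rw [hl, Nat.add_mul_mod_self_left, Nat.mod_eq_of_lt m.isLt]
  have hdiv : (l : ℕ) / Nv = t := by
    rw [hl, Nat.add_mul_div_left _ _ hNv, Nat.div_eq_of_lt m.isLt, Nat.zero_add]
  simp only [mulVec, dotProduct, conjTranspose_apply]
  symm
  refine Fintype.sum_of_injective
    (fun k : Fin M => (⟨k + m, val_add_val_lt_of_add_eq_add_one hM k m⟩ : Fin N))
    (fun k k' h => Fin.ext (by simpa using h)) _ _ ?_ fun k => ?_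
  · intro n hn
    rw [hW, dif_neg, star_zero, zero_mul]
    rw [hmod]
    rintro ⟨hmn, hnM⟩
    exact hn ⟨⟨n - m, hnM⟩, Fin.ext (by simp; omega)⟩
  · rw [hW, dif_pos (by simp [hmod])]
    congr 3 <;> ext <;> simp [hmod, hdiv]

include hM hW in
theorem svam_conjTranspose_mulVec_dsteer (u : ℝ) (t : Fin T) (m : Fin Nv) :
    (Wᴴ *ᵥ dsteer N u) (finProdFinEquiv (t, m))
      = exp (I * (Real.pi * u * m))
        * ((Fᴴ *ᵥ dsteer M u) t + I * (Real.pi * m) * (Fᴴ *ᵥ steer M u) t) := by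
  rw [svam_conjTranspose_mulVec hM hW]
  simp only [dsteer_shift, mulVec, dotProduct, conjTranspose_apply, mul_sum, ← sum_add_distrib]
  exact sum_congr rfl fun k _ => by ring

end Svam

theorem stmt2_general
    (N M T Nv : ℕ) (hNv : 0 < Nv)
    (hM : M + Nv = N + 1)
    (F : Matrix (Fin M) (Fin T) ℂ)
    (W : Matrix (Fin N) (Fin (T * Nv)) ℂ)
    (hW : ∀ (n : Fin N) (l : Fin (T * Nv)),
      W n l = if h : l.val % Nv ≤ n.val ∧ n.val - l.val % Nv < M then
          F ⟨n.val - l.val % Nv, h.2⟩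
            ⟨l.val / Nv, (Nat.div_lt_iff_lt_mul hNv).mpr l.isLt⟩
        else 0)
    (u : ℝ)
    (G : ℝ)
    (hG : G = Real.pi ^ 2 * ((Nv : ℝ) - 1) * (2 * (Nv : ℝ) - 1) / 6 *
        (star (steer M u) ⬝ᵥ ((F * Fᴴ) *ᵥ steer M u)).re
      - Real.pi * ((Nv : ℝ) - 1) *
        (star (dsteer M u) ⬝ᵥ ((F * Fᴴ) *ᵥ steer M u)).im)
    (Ps σn2 : ℝ) (α : ℂ) :
    star (dsteer N u) ⬝ᵥ ((W * Wᴴ) *ᵥ dsteer N u)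
      = (Nv : ℂ) * (star (dsteer M u) ⬝ᵥ ((F * Fᴴ) *ᵥ dsteer M u) + (G : ℂ)) ∧
    (star (dsteer M u) ⬝ᵥ ((F * Fᴴ) *ᵥ dsteer M u) + (G : ℂ) ≠ 0 →
      ((σn2 : ℂ) / (2 * Ps * Complex.normSq α)) *
        (star (dsteer N u) ⬝ᵥ ((W * Wᴴ) *ᵥ dsteer N u))⁻¹
      = (1 / (Nv : ℂ)) * (((σn2 : ℂ) / (2 * Ps * Complex.normSq α)) *
        (star (dsteer M u) ⬝ᵥ ((F * Fᴴ) *ᵥ dsteer M u) + (G : ℂ))⁻¹)) := by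
  have hphase (m : Fin Nv) : ‖exp (I * (Real.pi * u * m))‖ = 1 := by
    exact_mod_cast norm_exp_I_mul_ofReal (Real.pi * u * m)
  have key : star (dsteer N u) ⬝ᵥ ((W * Wᴴ) *ᵥ dsteer N u)
      = Nv * (star (dsteer M u) ⬝ᵥ ((F * Fᴴ) *ᵥ dsteer M u) + G) := by
    rw [hG]
    simp only [star_dotProduct_mul_conjTranspose_mulVec, star_dotProduct_self_eq_sum_normSq,
      ofReal_re]
    rw [← finProdFinEquiv.sum_comp, Fintype.sum_prod_type]
    simp only [svam_conjTranspose_mulVec_dsteer (hNv := hNv) hM hW,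
      sum_normSq_mul_add_I_mul_pi_mul Nv hphase, sum_add_distrib, sum_sub_distrib, ← mul_sum,
      dotProduct, Pi.star_apply, im_sum]
    push_cast
    ring
  exact ⟨key, fun _ => by rw [key, mul_inv]; ring⟩

/-- for the SVAM beamformer matrix `W` (column `l = t·N_v + m` is
`f_t` shifted down by `m` positions and zero-padded, `M = N − N_v + 1`),
`(∂φ_N/∂u)ᴴ W Wᴴ (∂φ_N/∂u) = N_v ((∂φ_M/∂u)ᴴ F Fᴴ (∂φ_M/∂u) + G)` with
`G = (π²(N_v−1)(2N_v−1)/6) φ_Mᴴ F Fᴴ φ_M − π(N_v−1) Im{(∂φ_M/∂u)ᴴ F Fᴴ φ_M}`,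
and hence the CRB equals
`(1/N_v)(σₙ²/(2Pₛ|α|²)){(∂φ_M/∂u)ᴴ F Fᴴ (∂φ_M/∂u) + G}⁻¹`. -/
theorem stmt2
    (N M T Nv : ℕ) (hN : 1 ≤ N) (hNv : 0 < Nv) (hNvN : Nv ≤ N)
    (hM : M + Nv = N + 1) (hT : 1 ≤ T)
    (F : Matrix (Fin M) (Fin T) ℂ)
    (W : Matrix (Fin N) (Fin (T * Nv)) ℂ)
    (hW : ∀ (n : Fin N) (l : Fin (T * Nv)),
      W n l = if h : l.val % Nv ≤ n.val ∧ n.val - l.val % Nv < M then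
          F ⟨n.val - l.val % Nv, h.2⟩
            ⟨l.val / Nv, (Nat.div_lt_iff_lt_mul hNv).mpr l.isLt⟩
        else 0)
    (u : ℝ)
    (G : ℝ)
    (hG : G = Real.pi ^ 2 * ((Nv : ℝ) - 1) * (2 * (Nv : ℝ) - 1) / 6 *
        (star (steer M u) ⬝ᵥ ((F * Fᴴ) *ᵥ steer M u)).re
      - Real.pi * ((Nv : ℝ) - 1) *
        (star (dsteer M u) ⬝ᵥ ((F * Fᴴ) *ᵥ steer M u)).im)
    (Ps σn2 : ℝ) (hPs : 0 < Ps) (hσ : 0 < σn2) (α : ℂ) (hα : α ≠ 0) :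
    star (dsteer N u) ⬝ᵥ ((W * Wᴴ) *ᵥ dsteer N u)
      = (Nv : ℂ) * (star (dsteer M u) ⬝ᵥ ((F * Fᴴ) *ᵥ dsteer M u) + (G : ℂ)) ∧
    (star (dsteer M u) ⬝ᵥ ((F * Fᴴ) *ᵥ dsteer M u) + (G : ℂ) ≠ 0 →
      ((σn2 : ℂ) / (2 * Ps * Complex.normSq α)) *
        (star (dsteer N u) ⬝ᵥ ((W * Wᴴ) *ᵥ dsteer N u))⁻¹
      = (1 / (Nv : ℂ)) * (((σn2 : ℂ) / (2 * Ps * Complex.normSq α)) *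
        (star (dsteer M u) ⬝ᵥ ((F * Fᴴ) *ᵥ dsteer M u) + (G : ℂ))⁻¹)) :=
  stmt2_general N M T Nv hNv hM F W hW u G hG Ps σn2 α
end

section
/- Let N ≥ 1, 1 ≤ N_v ≤ N, M = N − N_v + 1, T ≥ 1, and F = [f_0, …, f_{T−1}] ∈ ℂ^{M×T}. Let W ∈ ℂ^{N×(T·N_v)} be the SVAM beamformer matrix whose column with index l = t·N_v + m (0 ≤ m < N_v, 0 ≤ t < T) is w_l = [0_m^T, f_t^T, 0_{N_v−1−m}^T]^T ∈ ℂ^N. Then for every u ∈ ℝ the noiseless post-combining measurement vector factorizes as a Kronecker product: W^H φ_N(u) = (F^H φ_M(u)) ⊗ φ_{N_v}(u) ∈ ℂ^{T·N_v}, where the entry of index t·N_v + m of the Kronecker product a ⊗ b is a_t · b_m. That is, the SVAM measurements synthesize the manifold of a virtual uniform linear array of size N_v, modulated by the beamformer complex gains β_t(u) = f_t^H φ_M(u). -/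
open Matrix

/-- the SVAM measurements factorize as a Kronecker product:
`Wᴴ φ_N(u) = (Fᴴ φ_M(u)) ⊗ φ_{N_v}(u)` entrywise, i.e. for every
`l = t·N_v + m`, `(Wᴴ φ_N(u))_l = (Fᴴ φ_M(u))_t · (φ_{N_v}(u))_m`. -/
theorem stmt5
    (N M T Nv : ℕ) (hN : 1 ≤ N) (hNv : 0 < Nv) (hNvN : Nv ≤ N)
    (hM : M + Nv = N + 1) (hT : 1 ≤ T)
    (F : Matrix (Fin M) (Fin T) ℂ)
    (W : Matrix (Fin N) (Fin (T * Nv)) ℂ)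
    (hW : ∀ (n : Fin N) (l : Fin (T * Nv)),
      W n l = if h : l.val % Nv ≤ n.val ∧ n.val - l.val % Nv < M then
          F ⟨n.val - l.val % Nv, h.2⟩
            ⟨l.val / Nv, (Nat.div_lt_iff_lt_mul hNv).mpr l.isLt⟩
        else 0)
    (u : ℝ) :
    ∀ l : Fin (T * Nv),
      (Wᴴ *ᵥ steer N u) l
        = (Fᴴ *ᵥ steer M u) ⟨l.val / Nv, (Nat.div_lt_iff_lt_mul hNv).mpr l.isLt⟩
          * steer Nv u ⟨l.val % Nv, Nat.mod_lt _ hNv⟩ := by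
  intro l
  have hmlt : l.val % Nv < Nv := Nat.mod_lt _ hNv
  have htlt : l.val / Nv < T := (Nat.div_lt_iff_lt_mul hNv).mpr l.isLt
  simp only [Matrix.mulVec, Matrix.conjTranspose_apply, dotProduct]
  have hsum : ∑ n : Fin N, star (W n l) * steer N u n
      = ∑ k : Fin M, star (F k ⟨l.val / Nv, htlt⟩)
          * steer N u ⟨k.val + l.val % Nv, by omega⟩ := by
    rw [← Finset.sum_subset (Finset.subset_univ
        (Finset.univ.filter (fun n : Fin N => l.val % Nv ≤ n.val ∧ n.val - l.val % Nv < M)))]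
    · symm
      refine Finset.sum_bij' (i := fun (k : Fin M) _ => (⟨k.val + l.val % Nv, by omega⟩ : Fin N))
        (j := fun (n : Fin N) hn => (⟨n.val - l.val % Nv, by
          simp only [Finset.mem_filter] at hn; exact hn.2.2⟩ : Fin M)) ?_ ?_ ?_ ?_ ?_
      · intro k _
        simp only [Finset.mem_filter, Finset.mem_univ, true_and]
        constructor <;> omega
      · intro n hn; exact Finset.mem_univ _
      · intro k hk; ext; simp
      · intro n hn
        simp only [Finset.mem_filter, Finset.mem_univ, true_and] at hn
        ext; simp; omega
      · intro k hk
        rw [hW]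
        have hcond : l.val % Nv ≤ k.val + l.val % Nv ∧ (k.val + l.val % Nv) - l.val % Nv < M :=
          ⟨by omega, by simpa using k.isLt⟩
        rw [dif_pos hcond]
        have hkk : k = (⟨(↑k + ↑l % Nv) - ↑l % Nv, hcond.2⟩ : Fin M) := Fin.ext (by simp)
        congr 1
        exact congrArg star (congrFun (congrArg F hkk) _)
    · intro n _ hn
      simp only [Finset.mem_filter, Finset.mem_univ, true_and, not_and, not_lt] at hn
      rw [hW]
      rw [dif_neg]
      · simp
      · intro hc; exact absurd (hc.2) (by omega)
  rw [hsum]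
  rw [Finset.sum_mul]
  refine Finset.sum_congr rfl fun k _ => ?_
  rw [mul_assoc]
  congr 1
  simp only [steer]
  rw [← Complex.exp_add]
  congr 1
  push_cast
  ring
end

section
/- Let n ≥ 1, a ∈ ℂ^n with a ≠ 0, y ∈ ℂ^n, P_s > 0, σ_n² > 0. For γ ≥ 0 define the log marginal likelihood ℓ(γ) = −ln[(P_s γ ‖a‖² + σ_n²)(σ_n²)^{n−1}] − [σ_n^{-2}‖y‖² − (P_s γ/σ_n²)·|a^H y|²/(P_s γ ‖a‖² + σ_n²)] (which equals ln f(y) + n ln π for the density f(y) of CN(0, P_s γ a a^H + σ_n² I)). Then γ̂ = max{0, (1/(P_s ‖a‖²)) · ( |a^H y|²/‖a‖² − σ_n² )} is a global maximizer of ℓ over [0, ∞), i.e., ℓ(γ̂) ≥ ℓ(γ) for all γ ≥ 0. -/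
open Matrix

private lemma key_log_ineq (σ c t : ℝ) (hσ : 0 < σ) (hc : 0 ≤ c) (ht : σ ≤ t) :
    Real.log (max σ c) + c / max σ c ≤ Real.log t + c / t := by
  set s := max σ c with hs_def
  have hs : 0 < s := lt_of_lt_of_le hσ (le_max_left _ _)
  have ht0 : 0 < t := lt_of_lt_of_le hσ ht
  have hcs : c ≤ s := le_max_right _ _
  have hkey : 0 ≤ (s - c) * (t - s) := by
    rcases le_or_gt c σ with h | h
    · have hsσ : s = σ := max_eq_left h
      nlinarith
    · have hsc : s = c := max_eq_right h.le
      nlinarith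
  have hlog : Real.log s - Real.log t ≤ s / t - 1 := by
    have h := Real.log_le_sub_one_of_pos (show 0 < s / t by positivity)
    rwa [Real.log_div hs.ne' ht0.ne'] at h
  have h3 : (1 - s / t) - (c / s - c / t) = (s - c) * (t - s) / (s * t) := by
    field_simp
  have h4 : 0 ≤ (s - c) * (t - s) / (s * t) := by positivity
  linarith

/-- the noise-compensated normalized beamformer output power
`γ̂ = max{0, (1/(Pₛ‖a‖²))(|aᴴy|²/‖a‖² − σₙ²)}` globally maximizes the log
marginal likelihood
`ℓ(γ) = −ln[(Pₛγ‖a‖² + σₙ²)(σₙ²)^(n−1)] − [σₙ⁻²‖y‖² − (Pₛγ/σₙ²)|aᴴy|²/(Pₛγ‖a‖² + σₙ²)]`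
over `γ ∈ [0, ∞)`. -/
theorem stmt10
    (n : ℕ) (hn : 1 ≤ n) (a y : Fin n → ℂ) (ha : a ≠ 0)
    (Ps σn2 : ℝ) (hPs : 0 < Ps) (hσ : 0 < σn2)
    (ℓ : ℝ → ℝ)
    (hℓ : ∀ γ : ℝ, ℓ γ =
      -Real.log ((Ps * γ * (∑ i, Complex.normSq (a i)) + σn2) * σn2 ^ (n - 1))
      - (σn2⁻¹ * (∑ i, Complex.normSq (y i))
         - (Ps * γ / σn2) * Complex.normSq (star a ⬝ᵥ y) /
           (Ps * γ * (∑ i, Complex.normSq (a i)) + σn2)))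
    (γhat : ℝ)
    (hγhat : γhat = max 0 ((1 / (Ps * (∑ i, Complex.normSq (a i)))) *
      (Complex.normSq (star a ⬝ᵥ y) / (∑ i, Complex.normSq (a i)) - σn2))) :
    ∀ γ : ℝ, 0 ≤ γ → ℓ γ ≤ ℓ γhat := by
  intro γ hγ
  set A : ℝ := ∑ i, Complex.normSq (a i) with hA_def
  set B : ℝ := Complex.normSq (star a ⬝ᵥ y) with hB_def
  have hA : 0 < A := by
    obtain ⟨i, hi⟩ := Function.ne_iff.mp ha
    exact Finset.sum_pos' (fun j _ => Complex.normSq_nonneg _)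
      ⟨i, Finset.mem_univ i, Complex.normSq_pos.mpr hi⟩
  have hB : 0 ≤ B := Complex.normSq_nonneg _
  set c : ℝ := B / A with hc_def
  have hc : 0 ≤ c := by positivity
  -- γhat is nonnegative
  have hγhat0 : 0 ≤ γhat := hγhat ▸ le_max_left _ _
  -- reformulation of ℓ
  have hform : ∀ γ' : ℝ, 0 ≤ γ' → ℓ γ' =
      -(Real.log (Ps * γ' * A + σn2) + c / (Ps * γ' * A + σn2))
        + (c / σn2 - Real.log (σn2 ^ (n - 1))
           - σn2⁻¹ * (∑ i, Complex.normSq (y i))) := by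
    intro γ' hγ'
    have ht0 : 0 < Ps * γ' * A + σn2 := by positivity
    have hσpow : (0:ℝ) < σn2 ^ (n - 1) := by positivity
    rw [hℓ γ', Real.log_mul ht0.ne' hσpow.ne']
    have hBeq : (Ps * γ' / σn2) * B / (Ps * γ' * A + σn2)
        = c / σn2 - c / (Ps * γ' * A + σn2) := by
      rw [hc_def]
      field_simp
      ring
    rw [hBeq]
    ring
  rw [hform γ hγ, hform γhat hγhat0]
  -- the shifted argument at γhat equals max σn2 c
  have hthat : Ps * γhat * A + σn2 = max σn2 c := by
    rcases le_or_gt c σn2 with h | h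
    · have h1 : (1 / (Ps * A)) * (c - σn2) ≤ 0 := by
        apply mul_nonpos_of_nonneg_of_nonpos
        · positivity
        · linarith
      have : γhat = 0 := by rw [hγhat, max_eq_left h1]
      rw [this, max_eq_left h]
      ring
    · have h1 : (0:ℝ) ≤ (1 / (Ps * A)) * (c - σn2) := by
        apply mul_nonneg
        · positivity
        · linarith
      have hg : γhat = (1 / (Ps * A)) * (c - σn2) := by
        rw [hγhat, max_eq_right h1]
      rw [hg, max_eq_right h.le]
      field_simp
      ring
  rw [hthat]
  have hσt : σn2 ≤ Ps * γ * A + σn2 := by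
    have : 0 ≤ Ps * γ * A := by positivity
    linarith
  have := key_log_ineq σn2 c (Ps * γ * A + σn2) hσ hc hσt
  linarith
end

section
/- Let N ≥ 1, L ≥ 1, w ∈ ℂ^N, c ∈ ℂ^L, and let W = w c^H ∈ ℂ^{N×L} be a rank-at-most-one beamformer matrix. Let u ∈ ℝ and suppose v = W^H φ_N(u) ≠ 0. Then the conditional-CRB denominator for joint estimation of (α, u) vanishes: (∂φ_N(u)/∂u)^H W ( I − v v^H / (v^H v) ) W^H (∂φ_N(u)/∂u) = 0. In particular, if the same beamformer is used for all L snapshots (W rank one), the conditional Cramér–Rao bound for estimating u with unknown fading coefficient α is infinite. -/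
open Matrix

/-
The matrix in the middle is the orthogonal projector onto the complement of `v`. For a rank-one
`W = w cᴴ` both `v = Wᴴ φ_N(u)` and `Wᴴ ∂φ_N(u)/∂u` are multiples of `c`, so `Wᴴ ∂φ_N(u)/∂u`
lies on the line spanned by `v ≠ 0` and is annihilated by the projector.
-/

theorem conjTranspose_vecMulVec_star_mulVec {R m n : Type*} [CommSemiring R] [StarRing R]
    [Fintype m] (w : m → R) (c : n → R) (x : m → R) :
    (vecMulVec w (star c))ᴴ *ᵥ x = (star w ⬝ᵥ x) • c := by
  rw [conjTranspose_vecMulVec, star_star, vecMulVec_mulVec, op_smul_eq_smul]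

theorem one_sub_inv_smul_vecMulVec_star_mulVec_smul_self {K n : Type*} [Field K] [StarRing K]
    [Fintype n] [DecidableEq n] (v : n → K) (hv : star v ⬝ᵥ v ≠ 0) (k : K) :
    ((1 : Matrix n n K) - (star v ⬝ᵥ v)⁻¹ • vecMulVec v (star v)) *ᵥ (k • v) = 0 := by
  rw [mulVec_smul, sub_mulVec, one_mulVec, smul_mulVec, vecMulVec_mulVec, op_smul_eq_smul,
    smul_smul, inv_mul_cancel₀ hv, one_smul, sub_self, smul_zero]

theorem stmt13_general
    (N L : ℕ)
    (w : Fin N → ℂ) (c : Fin L → ℂ) (u : ℝ)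
    (W : Matrix (Fin N) (Fin L) ℂ) (hWdef : W = vecMulVec w (star c))
    (v : Fin L → ℂ) (hv : v = Wᴴ *ᵥ steer N u) (hvne : v ≠ 0) :
    star (dsteer N u) ⬝ᵥ
      (W *ᵥ (((1 : Matrix (Fin L) (Fin L) ℂ)
          - (star v ⬝ᵥ v)⁻¹ • vecMulVec v (star v)) *ᵥ (Wᴴ *ᵥ dsteer N u))) = 0 := by
  subst hWdef
  rw [conjTranspose_vecMulVec_star_mulVec] at hv
  set a := star w ⬝ᵥ steer N u
  have ha : a ≠ 0 := left_ne_zero_of_smul (hv ▸ hvne)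
  have hd : (vecMulVec w (star c))ᴴ *ᵥ dsteer N u = ((star w ⬝ᵥ dsteer N u) * a⁻¹) • v := by
    rw [conjTranspose_vecMulVec_star_mulVec, hv, smul_smul, inv_mul_cancel_right₀ ha]
  have hvv : star v ⬝ᵥ v ≠ 0 := by
    open scoped ComplexOrder in exact dotProduct_star_self_eq_zero.not.mpr hvne
  rw [hd, one_sub_inv_smul_vecMulVec_star_mulVec_smul_self v hvv, mulVec_zero, dotProduct_zero]

/-- if `W = w cᴴ` is a rank-(at most)-one beamformer matrix and
`v = Wᴴ φ_N(u) ≠ 0`, then the conditional-CRB denominator for joint estimation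
of `(α, u)` vanishes:
`(∂φ_N/∂u)ᴴ W (I − v vᴴ/(vᴴv)) Wᴴ (∂φ_N/∂u) = 0`, i.e. the conditional CRB
for `u` with unknown fading coefficient is infinite. -/
theorem stmt13
    (N L : ℕ) (hN : 1 ≤ N) (hL : 1 ≤ L)
    (w : Fin N → ℂ) (c : Fin L → ℂ) (u : ℝ)
    (W : Matrix (Fin N) (Fin L) ℂ) (hWdef : W = vecMulVec w (star c))
    (v : Fin L → ℂ) (hv : v = Wᴴ *ᵥ steer N u) (hvne : v ≠ 0) :
    star (dsteer N u) ⬝ᵥ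
      (W *ᵥ (((1 : Matrix (Fin L) (Fin L) ℂ)
          - (star v ⬝ᵥ v)⁻¹ • vecMulVec v (star v)) *ᵥ (Wᴴ *ᵥ dsteer N u))) = 0 :=
  stmt13_general N L w c u W hWdef v hv hvne
end
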